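/- Let X and Y be Banach spaces over ℝ such that every bounded linear operator from X to Y is weakly compact, and suppose X has the Dunford–Pettis property. Then every bounded linear operator T : X → Y is strictly singular. -/

import Mathlib

open Filter Topology

section Defs

variable {E : Type*} [NormedAddCommGroup E] [NormedSpace ℝ E]
variable {F : Type*} [NormedAddCommGroup F] [NormedSpace ℝ F]

/-- A sequence converges weakly to `x₀`. -/
def WeakConvTo (x : ℕ → E) (x₀ : E) : Prop :=
  ∀ f : E →L[ℝ] ℝ, Tendsto (fun n => f (x n)) atTop (𝓝 (f x₀))

/-- A sequence is weakly Cauchy. -/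
def WeaklyCauchySeq (x : ℕ → E) : Prop :=
  ∀ f : E →L[ℝ] ℝ, ∃ L : ℝ, Tendsto (fun n => f (x n)) atTop (𝓝 L)

/-- Every bounded sequence has a weakly Cauchy subsequence. -/
def AlmostReflexive (E : Type*) [NormedAddCommGroup E] [NormedSpace ℝ E] : Prop :=
  ∀ x : ℕ → E, (∃ C : ℝ, ∀ n, ‖x n‖ ≤ C) →
    ∃ φ : ℕ → ℕ, StrictMono φ ∧ WeaklyCauchySeq (x ∘ φ)

/-- Every weakly convergent sequence converges in norm. -/
def SchurProperty (E : Type*) [NormedAddCommGroup E] [NormedSpace ℝ E] : Prop :=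
  ∀ (x : ℕ → E) (x₀ : E), WeakConvTo x x₀ → Tendsto x atTop (𝓝 x₀)

/-- Sequential reflexivity: every bounded sequence has a weakly convergent subsequence. -/
def SeqReflexive (E : Type*) [NormedAddCommGroup E] [NormedSpace ℝ E] : Prop :=
  ∀ x : ℕ → E, (∃ C : ℝ, ∀ n, ‖x n‖ ≤ C) →
    ∃ φ : ℕ → ℕ, StrictMono φ ∧ ∃ x₀ : E, WeakConvTo (x ∘ φ) x₀

/-- Every weakly Cauchy sequence converges weakly. -/
def WeaklySeqComplete (E : Type*) [NormedAddCommGroup E] [NormedSpace ℝ E] : Prop :=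
  ∀ x : ℕ → E, WeaklyCauchySeq x → ∃ x₀ : E, WeakConvTo x x₀

/-- No infinite-dimensional closed subspace is (sequentially) reflexive. -/
def VeryIrreflexive (E : Type*) [NormedAddCommGroup E] [NormedSpace ℝ E] : Prop :=
  ∀ X₀ : Subspace ℝ E, IsClosed (X₀ : Set E) → ¬FiniteDimensional ℝ X₀ →
    ¬SeqReflexive X₀

/-- A strictly singular bounded operator: on no infinite-dimensional closed subspace is it
an isomorphism onto its image. -/
def StrictlySingular (T : E →L[ℝ] F) : Prop :=
  ∀ X₀ : Subspace ℝ E, IsClosed (X₀ : Set E) → ¬FiniteDimensional ℝ X₀ →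
    ¬∃ c : ℝ, 0 < c ∧ ∀ x ∈ X₀, c * ‖x‖ ≤ ‖T x‖

/-- A weakly compact operator. -/
def WeaklyCompactOp (T : E →L[ℝ] F) : Prop :=
  ∀ x : ℕ → E, (∃ C : ℝ, ∀ n, ‖x n‖ ≤ C) →
    ∃ φ : ℕ → ℕ, StrictMono φ ∧ ∃ y : F, WeakConvTo (fun n => T (x (φ n))) y

/-- A completely continuous operator maps weakly convergent sequences to norm convergent ones. -/
def CompletelyContinuousOp (T : E →L[ℝ] F) : Prop :=
  ∀ (x : ℕ → E) (x₀ : E), WeakConvTo x x₀ → ∃ y : F, Tendsto (fun n => T (x n)) atTop (𝓝 y)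

/-- The image of the closed unit ball is relatively compact in norm. -/
def CompactOp (T : E →L[ℝ] F) : Prop :=
  IsCompact (closure (⇑T '' Metric.closedBall (0 : E) 1))

/-- The Dunford–Pettis property. -/
def DunfordPettisProp (E : Type*) [NormedAddCommGroup E] [NormedSpace ℝ E] : Prop :=
  ∀ (Z : Type*) [NormedAddCommGroup Z] [NormedSpace ℝ Z] [CompleteSpace Z],
    ∀ T : E →L[ℝ] Z, WeaklyCompactOp T → CompletelyContinuousOp T

/-- The reciprocal Dunford–Pettis property. -/
def ReciprocalDunfordPettisProp (E : Type*) [NormedAddCommGroup E] [NormedSpace ℝ E] : Prop :=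
  ∀ (Z : Type*) [NormedAddCommGroup Z] [NormedSpace ℝ Z] [CompleteSpace Z],
    ∀ T : E →L[ℝ] Z, CompletelyContinuousOp T → WeaklyCompactOp T

/-- The Dieudonné property. -/
def DieudonneProp (E : Type*) [NormedAddCommGroup E] [NormedSpace ℝ E] : Prop :=
  ∀ (Z : Type*) [NormedAddCommGroup Z] [NormedSpace ℝ Z] [CompleteSpace Z],
    ∀ T : E →L[ℝ] Z,
      (∀ x : ℕ → E, WeaklyCauchySeq x → ∃ y : Z, WeakConvTo (fun n => T (x n)) y) →
      WeaklyCompactOp T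

/-- A Grothendieck space: weak*-convergent sequences in the dual converge weakly. -/
def GrothendieckSpace (E : Type*) [NormedAddCommGroup E] [NormedSpace ℝ E] : Prop :=
  ∀ (f : ℕ → (E →L[ℝ] ℝ)) (g : E →L[ℝ] ℝ),
    (∀ x : E, Tendsto (fun n => f n x) atTop (𝓝 (g x))) →
    ∀ F : (E →L[ℝ] ℝ) →L[ℝ] ℝ, Tendsto (fun n => F (f n)) atTop (𝓝 (F g))

/-- The Banach space ℓ¹ of absolutely summable real sequences. -/
abbrev EllOne : Type := lp (fun _ : ℕ => ℝ) 1

/-- Quasi-reflexive: the canonical image of `E` in its bidual has finite codimension. -/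
def QuasiReflexive (E : Type*) [NormedAddCommGroup E] [NormedSpace ℝ E] : Prop :=
  FiniteDimensional ℝ
    ((StrongDual ℝ (StrongDual ℝ E)) ⧸
      LinearMap.range (NormedSpace.inclusionInDoubleDual ℝ E : E →ₗ[ℝ] StrongDual ℝ (StrongDual ℝ E)))

/-- Hereditarily-ℓ¹: every infinite-dimensional closed subspace contains a closed subspace
topologically isomorphic to ℓ¹. -/
def HereditarilyEllOne (E : Type*) [NormedAddCommGroup E] [NormedSpace ℝ E] : Prop :=
  ∀ X₀ : Subspace ℝ E, IsClosed (X₀ : Set E) → ¬FiniteDimensional ℝ X₀ →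
    ∃ Z : Subspace ℝ E, Z ≤ X₀ ∧ IsClosed (Z : Set E) ∧ Nonempty (Z ≃L[ℝ] EllOne)

end Defs

variable {X : Type*} [NormedAddCommGroup X] [NormedSpace ℝ X] [CompleteSpace X]
variable {Y : Type*} [NormedAddCommGroup Y] [NormedSpace ℝ Y] [CompleteSpace Y]

/-!
Suppose `T` is bounded below on an infinite-dimensional closed subspace `X₀`. For a bounded
sequence `(xₙ)` in `X₀`, weak compactness gives `T xₙ ⇀ y` along a subsequence; `T X₀` is closed
and convex, hence weakly closed, so `y = T x₀`, and since every functional on `X₀` factors through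
`T`, also `xₙ ⇀ x₀`. By the Dunford–Pettis property `T xₙ` converges in norm, hence so does `xₙ`:
the unit ball of `X₀` is compact, a contradiction.
-/

open scoped NNReal BoundedContinuousFunction

section

variable {E F G : Type*} [NormedAddCommGroup E] [NormedSpace ℝ E]
  [NormedAddCommGroup F] [NormedSpace ℝ F] [NormedAddCommGroup G] [NormedSpace ℝ G]

theorem WeakConvTo.map {x : ℕ → E} {x₀ : E} (hx : WeakConvTo x x₀) (L : E →L[ℝ] F) :
    WeakConvTo (fun n => L (x n)) (L x₀) :=
  fun f => hx (f.comp L)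

theorem Convex.mem_of_weakConvTo {s : Set E} (hs : Convex ℝ s) (hsc : IsClosed s) {x : ℕ → E}
    {y : E} (hxs : ∀ n, x n ∈ s) (hxy : WeakConvTo x y) : y ∈ s := by
  by_contra hy
  obtain ⟨f, u, hfs, hfy⟩ := geometric_hahn_banach_closed_point hs hsc hy
  have : f y ≤ u := le_of_tendsto' (hxy f) fun n => (hfs _ (hxs n)).le
  linarith

theorem AntilipschitzWith.exists_dual_comp_eq {S : E →L[ℝ] F} {K : ℝ≥0}
    (hS : AntilipschitzWith K S) (f : StrongDual ℝ E) : ∃ g : StrongDual ℝ F, g.comp S = f := by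
  let e := LinearEquiv.ofInjective (S : E →ₗ[ℝ] F) hS.injective
  let ψ := (f.toLinearMap ∘ₗ e.symm.toLinearMap).mkContinuous (‖f‖ * K) fun z => by
    calc ‖f (e.symm z)‖ ≤ ‖f‖ * ‖e.symm z‖ := f.le_opNorm _
      _ ≤ ‖f‖ * (K * ‖S (e.symm z)‖) := by gcongr; exact hS.le_mul_norm (map_zero S) _
      _ = ‖f‖ * K * ‖z‖ := by
        rw [mul_assoc]
        congr 3
        exact congrArg Subtype.val (e.apply_symm_apply z)
  obtain ⟨g, hg, -⟩ := exists_extension_norm_eq _ ψ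
  refine ⟨g, ContinuousLinearMap.ext fun u => ?_⟩
  change g (e u) = f u
  simp [hg, ψ]

theorem WeakConvTo.of_map {S : E →L[ℝ] F} {K : ℝ≥0} (hS : AntilipschitzWith K S) {x : ℕ → E}
    {x₀ : E} (hx : WeakConvTo (fun n => S (x n)) (S x₀)) : WeakConvTo x x₀ := by
  intro f
  obtain ⟨g, rfl⟩ := hS.exists_dual_comp_eq f
  exact hx g

theorem WeaklyCompactOp.comp_left {T : E →L[ℝ] F} (hT : WeaklyCompactOp T) (L : F →L[ℝ] G) :
    WeaklyCompactOp (L.comp T) := by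
  intro x hx
  obtain ⟨φ, hφ, y, hy⟩ := hT x hx
  exact ⟨φ, hφ, L y, hy.map L⟩

theorem WeaklyCompactOp.comp_right {T : F →L[ℝ] G} (hT : WeaklyCompactOp T) (L : E →L[ℝ] F) :
    WeaklyCompactOp (T.comp L) := by
  rintro x ⟨C, hC⟩
  exact hT (fun n => L (x n)) ⟨‖L‖ * C, fun n => (L.le_opNorm _).trans (by gcongr; exact hC n)⟩

theorem CompletelyContinuousOp.comp_right {T : F →L[ℝ] G} (hT : CompletelyContinuousOp T)
    (L : E →L[ℝ] F) : CompletelyContinuousOp (T.comp L) :=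
  fun _ _ hx => hT _ _ (hx.map L)

theorem TopologicalSpace.IsSeparable.exists_norming_toBCF {s : Set E}
    (hs : TopologicalSpace.IsSeparable s) :
    ∃ R : E →L[ℝ] (ℕ →ᵇ ℝ), ∀ w ∈ s, ‖w‖ ≤ ‖R w‖ := by
  obtain ⟨c, hc, hsc⟩ := hs
  obtain ⟨d, hd⟩ := (hc.insert 0).exists_eq_range (Set.insert_nonempty 0 c)
  choose g hg_norm hg_eq using fun k => exists_dual_vector'' ℝ (d k)
  have hg_le (y : E) (k : ℕ) : ‖g k y‖ ≤ ‖y‖ :=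
    ((g k).le_opNorm y).trans (mul_le_of_le_one_left (norm_nonneg y) (hg_norm k))
  let R₀ : E →ₗ[ℝ] (ℕ →ᵇ ℝ) :=
    { toFun := fun y => .ofNormedAddCommGroupDiscrete (fun k => g k y) ‖y‖ (hg_le y)
      map_add' := fun y z => by ext k; simp
      map_smul' := fun a y => by ext k; simp }
  let R := R₀.mkContinuous 1 fun y => by
    simpa using (BoundedContinuousFunction.norm_le (norm_nonneg y)).mpr (hg_le y)
  refine ⟨R, fun w hw => ?_⟩
  have hR_closed : IsClosed {w : E | ‖w‖ ≤ ‖R w‖} :=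
    isClosed_le continuous_norm R.continuous.norm
  have hd_sub : Set.range d ⊆ {w : E | ‖w‖ ≤ ‖R w‖} := by
    rintro _ ⟨k, rfl⟩
    calc ‖d k‖ = ‖g k (d k)‖ := by simp [hg_eq k]
      _ ≤ ‖R (d k)‖ := (R (d k)).norm_coe_le_norm k
  exact hR_closed.closure_subset_iff.mpr hd_sub
    (closure_mono (hd ▸ Set.subset_insert 0 c) (hsc hw))

theorem cauchySeq_of_forall_cauchySeq_toBCF {y : ℕ → E}
    (hy : ∀ R : E →L[ℝ] (ℕ →ᵇ ℝ), CauchySeq fun n => R (y n)) : CauchySeq y := by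
  obtain ⟨R, hR⟩ := (Set.countable_range fun p : ℕ × ℕ => y p.1 - y p.2).isSeparable
    |>.exists_norming_toBCF
  rw [Metric.cauchySeq_iff]
  intro ε hε
  obtain ⟨N, hN⟩ := Metric.cauchySeq_iff.mp (hy R) ε hε
  refine ⟨N, fun m hm n hn => ?_⟩
  calc dist (y m) (y n) = ‖y m - y n‖ := dist_eq_norm _ _
    _ ≤ ‖R (y m - y n)‖ := hR _ ⟨(m, n), rfl⟩
    _ = dist (R (y m)) (R (y n)) := by rw [map_sub, dist_eq_norm]
    _ < ε := hN m hm n hn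

theorem DunfordPettisProp.completelyContinuousOp [CompleteSpace F] (hE : DunfordPettisProp E)
    {T : E →L[ℝ] F} (hT : WeaklyCompactOp T) : CompletelyContinuousOp T := by
  intro x x₀ hx
  -- `hE` only applies to targets in one fixed universe, so `T xₙ` is tested against
  -- countably many norming functionals, i.e. operators into a lift of `ℓ∞`.
  refine cauchySeq_tendsto_of_complete (cauchySeq_of_forall_cauchySeq_toBCF fun R => ?_)
  let e : ULift (ℕ →ᵇ ℝ) ≃L[ℝ] (ℕ →ᵇ ℝ) := ContinuousLinearEquiv.ulift
  let L := (e.symm : (ℕ →ᵇ ℝ) →L[ℝ] ULift (ℕ →ᵇ ℝ)).comp R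
  obtain ⟨z, hz⟩ := hE _ (L.comp T) (hT.comp_left L) x x₀ hx
  exact ((e.continuous.tendsto z).comp hz).cauchySeq

theorem finiteDimensional_of_antilipschitz [CompleteSpace E] {S : E →L[ℝ] F} {K : ℝ≥0}
    (hS : AntilipschitzWith K S) (hwc : WeaklyCompactOp S) (hcc : CompletelyContinuousOp S) :
    FiniteDimensional ℝ E := by
  have hclosed : IsClosed (Set.range S) := hS.isClosed_range S.uniformContinuous
  refine FiniteDimensional.of_isCompact_closedBall₀ ℝ one_pos <|
    IsSeqCompact.isCompact fun x hx => ?_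
  obtain ⟨φ, hφ, y, hy⟩ := hwc x ⟨1, fun n => mem_closedBall_zero_iff.mp (hx n)⟩
  obtain ⟨x₀, rfl⟩ : y ∈ Set.range S :=
    (LinearMap.range (S : E →ₗ[ℝ] F)).convex.mem_of_weakConvTo hclosed (fun n => ⟨_, rfl⟩) hy
  obtain ⟨z, hz⟩ := hcc _ _ (WeakConvTo.of_map hS hy)
  have hcauchy : CauchySeq (x ∘ φ) :=
    (hS.isUniformInducing S.uniformContinuous).cauchy_map_iff.mp <| by
      rw [Filter.map_map]
      exact hz.cauchySeq
  obtain ⟨l, hl⟩ := cauchySeq_tendsto_of_complete hcauchy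
  exact ⟨l, Metric.isClosed_closedBall.mem_of_tendsto hl (.of_forall fun n => hx (φ n)), φ, hφ, hl⟩

end

/-- If every bounded linear operator from `X` to `Y` is weakly compact and `X` has the
Dunford–Pettis property, then every bounded linear operator `T : X → Y` is strictly singular. -/
theorem stmt11 (h : ∀ T : X →L[ℝ] Y, WeaklyCompactOp T) (hX : DunfordPettisProp X)
    (T : X →L[ℝ] Y) : StrictlySingular T := by
  rintro X₀ hX₀ hinf ⟨c, hc, hbound⟩
  have : CompleteSpace X₀ := hX₀.completeSpace_coe
  have hS : AntilipschitzWith c.toNNReal⁻¹ (T.comp X₀.subtypeL) :=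
    (T.comp X₀.subtypeL).antilipschitz_of_bound fun u => by
      rw [NNReal.coe_inv, Real.coe_toNNReal _ hc.le, ← div_eq_inv_mul, le_div_iff₀' hc]
      exact hbound u u.2
  exact hinf (finiteDimensional_of_antilipschitz hS ((h T).comp_right _)
    ((hX.completelyContinuousOp (h T)).comp_right _))
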